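/- Let m_1, m_2, m_3 ∈ ℝ be such that (m_1, m_2) is I-realizable on ℕ₀ (equivalently m_1 > 0 and m_2 − m_1² > θ_1(1−θ_1) with θ_1 the fractional part of m_1). Write k_2 := ⌊m_2/m_1⌋ and θ_2 := m_2/m_1 − k_2. Then the polynomial P(x) = x(x−k_2)(x−k_2−1) satisfies L_P(m) ≤ L_Q(m) for every Q ∈ 𝒫_3, and (m_1, m_2, m_3) is realizable on ℕ₀ if and only if m_3/m_1 − (m_2/m_1)² ≥ θ_2(1−θ_2); it is I-realizable if this inequality is strict and B-realizable if equality holds. -/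

import Mathlib

/-!
With `r = m₂/m₁`, `L(x(x-k)(x-k-1)) = m₁ (m₃/m₁ - r² + (r-k)(r-k-1))`, and over integers `k`
the last product is smallest at `k = ⌊r⌋`, where it equals `-θ₂(1-θ₂)`; the members of `𝒫₃`
are these cubics with `k ≥ 1`. Realizability forces `L ≥ 0` on that cubic, which is nonnegative
on `ℕ₀`. Conversely, for `a < r ≤ a + 1` and `N` large, the Lagrange quadrature weights `L(ℓ_x)`
of the nodes `0, a, a + 1, N` are nonnegative and form a four-atom measure with moments `m`.
-/

open Polynomial

/-- `Lf P m = Σ_k p_k m_k`, the affine form associated to a polynomial `P`. -/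
noncomputable def Lf (P : Polynomial ℝ) (m : ℕ → ℝ) : ℝ := P.sum fun k a => a * m k

/-- `𝒫_j`: monic real polynomials of degree `j` with `j` distinct roots in `ℕ₀`,
nonnegative on `ℕ₀`. -/
def PolyP (j : ℕ) (P : Polynomial ℝ) : Prop :=
  P.Monic ∧ P.natDegree = j ∧
    (∃ S : Finset ℕ, S.card = j ∧ P = ∏ a ∈ S, (X - C (a : ℝ))) ∧
    ∀ x : ℕ, 0 ≤ P.eval (x : ℝ)

/-- `(m_1,…,m_j)` (with `m 0 = 1`) is realizable on `ℕ₀`: there is a probability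
measure on the nonnegative integers whose `k`-th moment is `m k` for `k ≤ j`. -/
def RealizableN0 (j : ℕ) (m : ℕ → ℝ) : Prop :=
  ∃ μ : ℕ → ℝ, (∀ x, 0 ≤ μ x) ∧
    ∀ k, k ≤ j → HasSum (fun x : ℕ => (x : ℝ) ^ k * μ x) (m k)

/-- I-realizability on `ℕ₀`. -/
def IRealizable (j : ℕ) (m : ℕ → ℝ) : Prop :=
  RealizableN0 j m ∧ ∀ P : Polynomial ℝ, PolyP j P ∨ PolyP (j - 1) P → 0 < Lf P m

/-- B-realizability on `ℕ₀`. -/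
def BRealizable (j : ℕ) (m : ℕ → ℝ) : Prop :=
  RealizableN0 j m ∧ ∃ P : Polynomial ℝ, (PolyP j P ∨ PolyP (j - 1) P) ∧ Lf P m = 0

theorem Lf_eq_sum_range {P : ℝ[X]} {n : ℕ} (hP : P.natDegree < n) (m : ℕ → ℝ) :
    Lf P m = ∑ k ∈ Finset.range n, P.coeff k * m k :=
  sum_over_range' P (f := fun k a => a * m k) (fun _ => zero_mul _) n hP

theorem Lf_X (m : ℕ → ℝ) : Lf X m = m 1 := by
  simp [Lf_eq_sum_range (P := X) (n := 2) (by simp), coeff_X]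

theorem Lf_X_sub_C_mul_X_sub_C (m : ℕ → ℝ) (a b : ℝ) :
    Lf ((X - C a) * (X - C b)) m = m 2 - (a + b) * m 1 + a * b * m 0 := by
  have hP : ((X - C a) * (X - C b)).natDegree < 3 := by
    apply Nat.lt_succ_of_le; compute_degree!
  simp only [Lf_eq_sum_range hP, Finset.sum_range_succ, Finset.sum_range_zero]
  simp [coeff_X, coeff_C, mul_sub, sub_mul]
  ring

theorem Lf_X_mul_X_sub_C_mul_X_sub_C (m : ℕ → ℝ) (a b : ℝ) :
    Lf (X * ((X - C a) * (X - C b))) m = m 3 - (a + b) * m 2 + a * b * m 1 := by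
  have hP : (X * ((X - C a) * (X - C b))).natDegree < 4 := by
    apply Nat.lt_succ_of_le; compute_degree!
  simp only [Lf_eq_sum_range hP, Finset.sum_range_succ, Finset.sum_range_zero]
  simp [coeff_X, coeff_C, mul_sub, sub_mul, coeff_X_mul]
  ring

theorem hasSum_eval_mul_of_moments {j : ℕ} {m μ : ℕ → ℝ}
    (hμ : ∀ k ≤ j, HasSum (fun x : ℕ => (x : ℝ) ^ k * μ x) (m k)) {P : ℝ[X]}
    (hP : P.natDegree ≤ j) : HasSum (fun x : ℕ => P.eval (x : ℝ) * μ x) (Lf P m) := by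
  have hP' : P.natDegree < j + 1 := Nat.lt_succ_of_le hP
  simp only [eval_eq_sum_range' hP', Finset.sum_mul, Lf_eq_sum_range hP', mul_assoc]
  exact hasSum_sum fun k hk =>
    (hμ k (Nat.lt_succ_iff.mp (Finset.mem_range.mp hk))).mul_left _

theorem RealizableN0.Lf_nonneg {j : ℕ} {m : ℕ → ℝ} (h : RealizableN0 j m) {P : ℝ[X]}
    (hP : P.natDegree ≤ j) (hPnn : ∀ x : ℕ, 0 ≤ P.eval (x : ℝ)) : 0 ≤ Lf P m := by
  obtain ⟨μ, hμ, hmom⟩ := h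
  exact (hasSum_eval_mul_of_moments hmom hP).nonneg fun x => mul_nonneg (hPnn x) (hμ x)

theorem realizableN0_of_atoms {ι : Type*} {j : ℕ} {m : ℕ → ℝ} (s : Finset ι) (x : ι → ℕ)
    (w : ι → ℝ) (hw : ∀ i ∈ s, 0 ≤ w i)
    (hmom : ∀ k ≤ j, ∑ i ∈ s, (x i : ℝ) ^ k * w i = m k) : RealizableN0 j m := by
  classical
  refine ⟨fun n => ∑ i ∈ s, if x i = n then w i else 0,
    fun n => Finset.sum_nonneg fun i hi => by split_ifs <;> simp [hw i hi], fun k hk => ?_⟩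
  rw [← hmom k hk]
  simp only [Finset.mul_sum]
  refine hasSum_sum fun i _ => ?_
  convert hasSum_single (x i) fun n hn => ?_ using 1
  · simp
  · simp [Ne.symm hn]

theorem polyP_prod_X_sub_C (S : Finset ℕ) (hS : ∀ x : ℕ, 0 ≤ ∏ a ∈ S, ((x : ℝ) - a)) :
    PolyP S.card (∏ a ∈ S, (X - C (a : ℝ))) :=
  ⟨Lagrange.nodal_monic, Lagrange.natDegree_nodal, ⟨S, rfl, rfl⟩,
    fun x => by simpa [eval_prod] using hS x⟩

theorem Int.cast_mul_sub_one_nonneg (z : ℤ) : 0 ≤ (z : ℝ) * (z - 1) := by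
  exact_mod_cast (by nlinarith [Int.le_self_sq z] : (0 : ℤ) ≤ z * (z - 1))

noncomputable def consecutiveCubic (t : ℝ) : ℝ[X] := X * ((X - C t) * (X - C (t + 1)))

theorem natDegree_consecutiveCubic_le (t : ℝ) : (consecutiveCubic t).natDegree ≤ 3 := by
  unfold consecutiveCubic
  compute_degree

theorem consecutiveCubic_eval_nonneg (x : ℕ) (n : ℤ) : 0 ≤ (consecutiveCubic n).eval (x : ℝ) := by
  have := Int.cast_mul_sub_one_nonneg (x - n)
  push_cast at this
  simpa [consecutiveCubic] using mul_nonneg x.cast_nonneg (by linarith)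

theorem polyP_one_X : PolyP 1 (X : ℝ[X]) := by
  simpa using polyP_prod_X_sub_C {0} (by simp)

theorem polyP_two_consecutive (a : ℕ) : PolyP 2 ((X - C (a : ℝ)) * (X - C ((a : ℝ) + 1))) := by
  have := polyP_prod_X_sub_C {a, a + 1} fun x => by
    simpa [sub_sub] using Int.cast_mul_sub_one_nonneg (x - a)
  simpa [mul_comm] using this

theorem polyP_three_consecutiveCubic {k : ℕ} (hk : 0 < k) : PolyP 3 (consecutiveCubic k) := by
  have h0 : 0 ∉ ({k, k + 1} : Finset ℕ) := by simp [hk.ne]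
  have hk1 : k ∉ ({k + 1} : Finset ℕ) := by simp
  have := polyP_prod_X_sub_C {0, k, k + 1} fun x => by
    simpa [Finset.prod_insert h0, Finset.prod_insert hk1, consecutiveCubic] using
      consecutiveCubic_eval_nonneg x k
  rw [Finset.card_insert_of_notMem h0, Finset.card_insert_of_notMem hk1,
    Finset.prod_insert h0, Finset.prod_insert hk1] at this
  simpa [consecutiveCubic] using this

theorem Finset.exists_lt_lt_eq_of_card_eq_three {S : Finset ℕ} (hS : S.card = 3) :
    ∃ a b c, a < b ∧ b < c ∧ S = {a, b, c} := by
  let f := S.orderEmbOfFin hS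
  refine ⟨f 0, f 1, f 2, f.strictMono (by decide), f.strictMono (by decide), ?_⟩
  ext y
  rw [← Finset.mem_coe, ← S.range_orderEmbOfFin hS]
  simp only [Set.mem_range, Fin.exists_fin_succ, Fin.exists_fin_zero, Finset.mem_insert,
    Finset.mem_singleton]
  simp [eq_comm, f]

theorem eq_zero_and_eq_add_one_of_cubic_nonneg {a b c : ℕ} (hab : a < b) (hbc : b < c)
    (h : ∀ x : ℕ, 0 ≤ ((x : ℝ) - a) * (((x : ℝ) - b) * ((x : ℝ) - c))) :
    a = 0 ∧ c = b + 1 := by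
  have hab' : (a : ℝ) + 1 ≤ b := by exact_mod_cast hab
  have hbc' : (b : ℝ) + 1 ≤ c := by exact_mod_cast hbc
  constructor
  · by_contra ha
    have ha' : (1 : ℝ) ≤ a := by exact_mod_cast Nat.one_le_iff_ne_zero.2 ha
    have h0 := h 0
    push_cast at h0
    nlinarith [mul_pos (by linarith : (0 : ℝ) < b) (by linarith : (0 : ℝ) < c)]
  · by_contra hc
    have hc' : (b : ℝ) + 2 ≤ c := by exact_mod_cast (by omega : b + 2 ≤ c)
    have hb1 := h (b + 1)
    push_cast at hb1
    nlinarith [mul_pos (by linarith : (0 : ℝ) < b + 1 - a) (by linarith : (0 : ℝ) < c - b - 1)]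

theorem PolyP.eq_consecutiveCubic {Q : ℝ[X]} (hQ : PolyP 3 Q) :
    ∃ k : ℕ, 0 < k ∧ Q = consecutiveCubic k := by
  obtain ⟨-, -, ⟨S, hS, rfl⟩, hnn⟩ := hQ
  obtain ⟨a, b, c, hab, hbc, rfl⟩ := Finset.exists_lt_lt_eq_of_card_eq_three hS
  have ha : a ∉ ({b, c} : Finset ℕ) := by simp [hab.ne, (hab.trans hbc).ne]
  have hb : b ∉ ({c} : Finset ℕ) := by simp [hbc.ne]
  obtain ⟨rfl, rfl⟩ := eq_zero_and_eq_add_one_of_cubic_nonneg hab hbc fun x => by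
    simpa [Finset.prod_insert ha, Finset.prod_insert hb] using hnn x
  exact ⟨b, hab, by simp [Finset.prod_insert ha, Finset.prod_insert hb, consecutiveCubic]⟩

theorem floor_consecutive_mul_le (t : ℝ) (n : ℤ) :
    (t - ⌊t⌋) * (t - ⌊t⌋ - 1) ≤ (t - n) * (t - n - 1) := by
  have hf0 := Int.floor_le t
  have hf1 := Int.lt_floor_add_one t
  obtain ⟨j, hj⟩ : ∃ j : ℤ, (n : ℝ) = ⌊t⌋ - j := ⟨⌊t⌋ - n, by push_cast; ring⟩
  have hj0 := Int.cast_mul_sub_one_nonneg j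
  have hj1 := Int.cast_mul_sub_one_nonneg (-j)
  push_cast at hj1
  rw [hj]
  rcases le_total 0 j with h | h
  · have : (0 : ℝ) ≤ j := by exact_mod_cast h
    nlinarith
  · have : (j : ℝ) ≤ 0 := by exact_mod_cast h
    nlinarith

theorem Lf_consecutiveCubic {m : ℕ → ℝ} (hm1 : m 1 ≠ 0) (t : ℝ) :
    Lf (consecutiveCubic t) m =
      m 1 * (m 3 / m 1 - (m 2 / m 1) ^ 2 + (m 2 / m 1 - t) * (m 2 / m 1 - t - 1)) := by
  rw [consecutiveCubic, Lf_X_mul_X_sub_C_mul_X_sub_C]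
  field_simp
  ring

theorem Lf_consecutiveCubic_floor_le {m : ℕ → ℝ} (hm1 : 0 < m 1) (n : ℤ) :
    Lf (consecutiveCubic ⌊m 2 / m 1⌋) m ≤ Lf (consecutiveCubic n) m := by
  rw [Lf_consecutiveCubic hm1.ne', Lf_consecutiveCubic hm1.ne']
  gcongr _ * (_ + ?_)
  exact floor_consecutive_mul_le _ n

theorem Lf_consecutiveCubic_floor_le_of_polyP {m : ℕ → ℝ} (hm1 : 0 < m 1) {Q : ℝ[X]}
    (hQ : PolyP 3 Q) : Lf (consecutiveCubic ⌊m 2 / m 1⌋) m ≤ Lf Q m := by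
  obtain ⟨k, -, rfl⟩ := hQ.eq_consecutiveCubic
  exact_mod_cast Lf_consecutiveCubic_floor_le hm1 k

/-- `L(ℓ_x)` for the Lagrange basis polynomials `ℓ_x` of the nodes `0, a, b, N`, written with
`q = L((X-a)(X-b))` and `c = L(X(X-a)(X-b))`. -/
noncomputable def lagrangeWeights (m : ℕ → ℝ) (a b N : ℝ) : Fin 4 → ℝ :=
  let q := m 2 - (a + b) * m 1 + a * b * m 0
  let c := m 3 - (a + b) * m 2 + a * b * m 1
  ![(N * q - c) / (a * b * N), ((N - a) * (b * m 1 - m 2) + c) / (a * (b - a) * (N - a)),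
    ((N - b) * (m 2 - a * m 1) - c) / (b * (b - a) * (N - b)), c / (N * (N - a) * (N - b))]

theorem pow_mul_lagrangeWeights_sum (m : ℕ → ℝ) {a b N : ℝ} (ha : a ≠ 0) (hb : b ≠ 0)
    (hN : N ≠ 0) (hab : b - a ≠ 0) (haN : N - a ≠ 0) (hbN : N - b ≠ 0) {k : ℕ} (hk : k ≤ 3) :
    0 ^ k * lagrangeWeights m a b N 0 + a ^ k * lagrangeWeights m a b N 1 +
      b ^ k * lagrangeWeights m a b N 2 + N ^ k * lagrangeWeights m a b N 3 = m k := by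
  simp only [lagrangeWeights, Matrix.cons_val]
  interval_cases k <;> field_simp <;> ring

theorem realizableN0_three_of_nodes {m : ℕ → ℝ} {a b : ℕ} (ha : 0 < a) (hab : a < b)
    (hma : a * m 1 < m 2) (hmb : m 2 ≤ b * m 1)
    (hq : 0 < Lf ((X - C (a : ℝ)) * (X - C (b : ℝ))) m)
    (hc : 0 ≤ Lf (X * ((X - C (a : ℝ)) * (X - C (b : ℝ)))) m) : RealizableN0 3 m := by
  rw [Lf_X_sub_C_mul_X_sub_C] at hq
  rw [Lf_X_mul_X_sub_C_mul_X_sub_C] at hc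
  have ha' : (0 : ℝ) < a := by exact_mod_cast ha
  have hab' : (a : ℝ) < b := by exact_mod_cast hab
  have he : 0 < m 2 - a * m 1 := by linarith
  set q := m 2 - (a + b) * m 1 + a * b * m 0
  set c := m 3 - (a + b) * m 2 + a * b * m 1
  obtain ⟨N, hN⟩ := exists_nat_gt ((b : ℝ) + c / (m 2 - a * m 1) + c / q)
  have hce : c / (m 2 - a * m 1) < N - b := by
    linarith [div_nonneg hc hq.le]
  have hcq : c / q < N := by
    linarith [div_nonneg hc he.le]
  have hba : (0 : ℝ) < b - a := by linarith
  have hNb : (0 : ℝ) < N - b := (div_nonneg hc he.le).trans_lt hce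
  have hNa : (0 : ℝ) < N - a := by linarith
  have h0 : 0 ≤ N * q - c := by linarith [(div_lt_iff₀ hq).mp hcq]
  have h2 : 0 ≤ (N - b) * (m 2 - a * m 1) - c := by linarith [(div_lt_iff₀ he).mp hce]
  refine realizableN0_of_atoms Finset.univ ![0, a, b, N] (lagrangeWeights m a b N)
    (fun i _ => ?_) fun k hk => ?_
  · fin_cases i <;> simp only [lagrangeWeights, Fin.zero_eta, Fin.mk_one, Fin.reduceFinMk,
      Matrix.cons_val]
    · exact div_nonneg h0 (by positivity)
    · exact div_nonneg (by nlinarith) (by positivity)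
    · exact div_nonneg h2 (by positivity)
    · exact div_nonneg hc (by positivity)
  · have := pow_mul_lagrangeWeights_sum m (N := N) ha'.ne' (ha'.trans hab').ne' (by linarith)
      hba.ne' hNa.ne' hNb.ne' hk
    simpa [Fin.sum_univ_four] using this

theorem exists_nat_pos_lt_le_add_one {r : ℝ} (hr : 1 < r) :
    ∃ a : ℕ, 0 < a ∧ (a : ℝ) < r ∧ r ≤ a + 1 := by
  have hc : 1 < ⌈r⌉₊ := Nat.lt_ceil.mpr (by exact_mod_cast hr)
  refine ⟨⌈r⌉₊ - 1, by omega, ?_, ?_⟩ <;> rw [Nat.cast_sub hc.le, Nat.cast_one]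
  · linarith [Nat.ceil_lt_add_one (zero_le_one.trans hr.le)]
  · linarith [Nat.le_ceil r]

theorem IRealizable.Lf_consecutive_pos {m : ℕ → ℝ} (hI : IRealizable 2 m) (a : ℕ) :
    0 < Lf ((X - C (a : ℝ)) * (X - C ((a : ℝ) + 1))) m :=
  hI.2 _ (Or.inl (polyP_two_consecutive a))

theorem IRealizable.one_pos {m : ℕ → ℝ} (hI : IRealizable 2 m) : 0 < m 1 := by
  simpa [Lf_X] using hI.2 X (Or.inr polyP_one_X)

theorem IRealizable.one_lt_div {m : ℕ → ℝ} (hI : IRealizable 2 m) : 1 < m 2 / m 1 := by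
  have := hI.Lf_consecutive_pos 0
  simp only [Lf_X_sub_C_mul_X_sub_C, Nat.cast_zero] at this
  exact (_root_.one_lt_div hI.one_pos).mpr (by linarith)

theorem IRealizable.realizableN0_three_iff {m : ℕ → ℝ} (hI : IRealizable 2 m) :
    RealizableN0 3 m ↔ 0 ≤ Lf (consecutiveCubic ⌊m 2 / m 1⌋) m := by
  refine ⟨fun h => h.Lf_nonneg (natDegree_consecutiveCubic_le _)
    (consecutiveCubic_eval_nonneg · _), fun h => ?_⟩
  have hm1 := hI.one_pos
  obtain ⟨a, ha, har, hra⟩ := exists_nat_pos_lt_le_add_one hI.one_lt_div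
  refine realizableN0_three_of_nodes (b := a + 1) ha a.lt_add_one ((lt_div_iff₀ hm1).mp har)
    (by exact_mod_cast (div_le_iff₀ hm1).mp hra) (by exact_mod_cast hI.Lf_consecutive_pos a) ?_
  have := h.trans (Lf_consecutiveCubic_floor_le hm1 a)
  push_cast at this ⊢
  exact this

theorem IRealizable.polyP_three_consecutiveCubic_floor {m : ℕ → ℝ} (hI : IRealizable 2 m) :
    PolyP 3 (consecutiveCubic ⌊m 2 / m 1⌋) := by
  have hr := hI.one_lt_div.le
  rw [← Int.natCast_floor_eq_floor (zero_le_one.trans hr), Int.cast_natCast]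
  exact polyP_three_consecutiveCubic (Nat.floor_pos.mpr hr)

theorem case_n3_general (m : ℕ → ℝ) (hI : IRealizable 2 m)
    (k2 : ℤ) (hk2 : k2 = ⌊m 2 / m 1⌋) (θ2 : ℝ) (hθ2 : θ2 = m 2 / m 1 - (k2 : ℝ)) :
    (∀ Q, PolyP 3 Q →
        Lf (X * ((X - C (k2 : ℝ)) * (X - C ((k2 : ℝ) + 1)))) m ≤ Lf Q m) ∧
      (RealizableN0 3 m ↔ θ2 * (1 - θ2) ≤ m 3 / m 1 - (m 2 / m 1) ^ 2) ∧
      (θ2 * (1 - θ2) < m 3 / m 1 - (m 2 / m 1) ^ 2 → IRealizable 3 m) ∧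
      (m 3 / m 1 - (m 2 / m 1) ^ 2 = θ2 * (1 - θ2) → BRealizable 3 m) := by
  subst hk2 hθ2
  have hm1 := hI.one_pos
  have hLf : Lf (consecutiveCubic ⌊m 2 / m 1⌋) m = m 1 * (m 3 / m 1 - (m 2 / m 1) ^ 2 -
      (m 2 / m 1 - ⌊m 2 / m 1⌋) * (1 - (m 2 / m 1 - ⌊m 2 / m 1⌋))) := by
    rw [Lf_consecutiveCubic hm1.ne']
    ring
  have hreal : RealizableN0 3 m ↔ (m 2 / m 1 - ⌊m 2 / m 1⌋) * (1 - (m 2 / m 1 - ⌊m 2 / m 1⌋)) ≤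
      m 3 / m 1 - (m 2 / m 1) ^ 2 := by
    rw [hI.realizableN0_three_iff, hLf, mul_nonneg_iff_of_pos_left hm1, sub_nonneg]
  have hmin (Q : ℝ[X]) (hQ : PolyP 3 Q) : Lf (consecutiveCubic ⌊m 2 / m 1⌋) m ≤ Lf Q m :=
    Lf_consecutiveCubic_floor_le_of_polyP hm1 hQ
  refine ⟨hmin, hreal, fun h => ⟨hreal.2 h.le, ?_⟩,
    fun h => ⟨hreal.2 h.ge, _, Or.inl hI.polyP_three_consecutiveCubic_floor, ?_⟩⟩
  · rintro Q (hQ | hQ)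
    · exact (hLf ▸ mul_pos hm1 (sub_pos.mpr h)).trans_le (hmin Q hQ)
    · exact hI.2 Q (Or.inl hQ)
  · rw [hLf, h, sub_self, mul_zero]

/-- The `n = 3` case: if `(m₁,m₂)` is I-realizable then, with `k₂ = ⌊m₂/m₁⌋` and
`θ₂ = m₂/m₁ - k₂`, the polynomial `x(x-k₂)(x-k₂-1)` minimizes `L_·(m)` over
`𝒫_3`, and `(m₁,m₂,m₃)` is realizable on `ℕ₀` iff
`m₃/m₁ - (m₂/m₁)² ≥ θ₂(1-θ₂)` (I-realizable if strict, B-realizable if equality). -/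
theorem case_n3 (m : ℕ → ℝ) (hm0 : m 0 = 1) (hI : IRealizable 2 m)
    (k2 : ℤ) (hk2 : k2 = ⌊m 2 / m 1⌋) (θ2 : ℝ) (hθ2 : θ2 = m 2 / m 1 - (k2 : ℝ)) :
    (∀ Q, PolyP 3 Q →
        Lf (X * ((X - C (k2 : ℝ)) * (X - C ((k2 : ℝ) + 1)))) m ≤ Lf Q m) ∧
      (RealizableN0 3 m ↔ θ2 * (1 - θ2) ≤ m 3 / m 1 - (m 2 / m 1) ^ 2) ∧
      (θ2 * (1 - θ2) < m 3 / m 1 - (m 2 / m 1) ^ 2 → IRealizable 3 m) ∧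
      (m 3 / m 1 - (m 2 / m 1) ^ 2 = θ2 * (1 - θ2) → BRealizable 3 m) :=
  case_n3_general m hI k2 hk2 θ2 hθ2
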